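/- The Margrabe price function V(t,S₁,S₂) = S₁Φ(d₊) − S₂Φ(d₋), with d± = ln(S₁/S₂)/(σ√(T−t)) ± σ√(T−t)/2 and σ² = σ₁² + σ₂² − 2ρσ₁σ₂ > 0, solves the PDE ∂V/∂t + ½σ₁²S₁²∂²V/∂S₁² + ½σ₂²S₂²∂²V/∂S₂² + ρσ₁σ₂S₁S₂∂²V/∂S₁∂S₂ + r(S₁∂V/∂S₁ + S₂∂V/∂S₂) − rV = 0 for 0 ≤ t < T and S₁, S₂ > 0. -/

import Mathlib

/-- Standard normal cumulative distribution function. -/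
noncomputable def stdNormalCDF (x : ℝ) : ℝ :=
  ∫ t in Set.Iic x, Real.exp (-t^2 / 2) / Real.sqrt (2 * Real.pi)

noncomputable def nPDF (x : ℝ) : ℝ := Real.exp (-x^2 / 2) / Real.sqrt (2 * Real.pi)

lemma integrable_nPDF : MeasureTheory.Integrable nPDF := by
  have h : MeasureTheory.Integrable (fun x : ℝ => Real.exp (-(1/2 : ℝ) * x^2)) :=
    integrable_exp_neg_mul_sq (by norm_num)
  have he : nPDF = fun x => Real.exp (-(1/2:ℝ) * x^2) * (Real.sqrt (2*Real.pi))⁻¹ := by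
    funext x; rw [nPDF, div_eq_mul_inv]; ring_nf
  rw [he]; exact h.mul_const _

lemma continuous_nPDF : Continuous nPDF := by
  unfold nPDF; fun_prop

lemma hasDerivAt_stdNormalCDF (x : ℝ) : HasDerivAt stdNormalCDF (nPDF x) x := by
  have key : stdNormalCDF = fun y => (∫ t in Set.Iic (0:ℝ), nPDF t) + ∫ t in (0:ℝ)..y, nPDF t := by
    funext y
    have h := intervalIntegral.integral_Iic_sub_Iic
      (integrable_nPDF.integrableOn (s := Set.Iic 0))
      (integrable_nPDF.integrableOn (s := Set.Iic y))
    simp only [stdNormalCDF, nPDF] at *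
    linarith
  rw [key]
  exact ((continuous_nPDF.integral_hasStrictDerivAt 0 x).hasDerivAt).const_add _

lemma key_id (c x y : ℝ) (hc : 0 < c) (hx : 0 < x) (hy : 0 < y) :
    x * nPDF (Real.log (x/y)/c + c/2) = y * nPDF (Real.log (x/y)/c - c/2) := by
  set L := Real.log (x/y) with hLdef
  have hL : Real.exp L = x / y := Real.exp_log (by positivity)
  have harg : -(L/c + c/2)^2/2 = -(L/c - c/2)^2/2 - L := by
    field_simp; ring
  unfold nPDF
  rw [harg, Real.exp_sub, hL]
  have h2 : Real.sqrt (2*Real.pi) > 0 := Real.sqrt_pos.2 (by positivity)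
  field_simp

lemma hasDerivAt_Phi_d1 (c x y k : ℝ) (hc : 0 < c) (hx : 0 < x) (hy : 0 < y) :
    HasDerivAt (fun z => stdNormalCDF (Real.log (z/y)/c + k))
      (nPDF (Real.log (x/y)/c + k) * (1/(x*c))) x := by
  have h1 : HasDerivAt (fun z : ℝ => Real.log z - Real.log y) (1/x) x := by
    simpa [one_div] using (Real.hasDerivAt_log hx.ne').sub_const (Real.log y)
  have heq : (fun z : ℝ => Real.log (z/y)) =ᶠ[nhds x] (fun z => Real.log z - Real.log y) := by
    filter_upwards [eventually_gt_nhds hx] with z hz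
    rw [Real.log_div hz.ne' hy.ne']
  have hlog : HasDerivAt (fun z : ℝ => Real.log (z/y)) (1/x) x :=
    h1.congr_of_eventuallyEq heq
  have hd : HasDerivAt (fun z : ℝ => Real.log (z/y)/c + k) (1/(x*c)) x := by
    have := (hlog.div_const c).add_const k
    exact this.congr_deriv (by ring)
  exact (hasDerivAt_stdNormalCDF _).comp x hd

lemma hasDerivAt_Phi_d2 (c x y k : ℝ) (hc : 0 < c) (hx : 0 < x) (hy : 0 < y) :
    HasDerivAt (fun z => stdNormalCDF (Real.log (x/z)/c + k))
      (nPDF (Real.log (x/y)/c + k) * (-(1/(y*c)))) y := by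
  have h1 : HasDerivAt (fun z : ℝ => Real.log x - Real.log z) (-(1/y)) y := by
    simpa [one_div] using (Real.hasDerivAt_log hy.ne').const_sub (Real.log x)
  have heq : (fun z : ℝ => Real.log (x/z)) =ᶠ[nhds y] (fun z => Real.log x - Real.log z) := by
    filter_upwards [eventually_gt_nhds hy] with z hz
    rw [Real.log_div hx.ne' hz.ne']
  have hlog : HasDerivAt (fun z : ℝ => Real.log (x/z)) (-(1/y)) y :=
    h1.congr_of_eventuallyEq heq
  have hd : HasDerivAt (fun z : ℝ => Real.log (x/z)/c + k) (-(1/(y*c))) y := by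
    have := (hlog.div_const c).add_const k
    exact this.congr_deriv (by ring)
  exact (hasDerivAt_stdNormalCDF _).comp y hd

lemma hasDerivAt_margrabe_S1 (c x y : ℝ) (hc : 0 < c) (hx : 0 < x) (hy : 0 < y) :
    HasDerivAt (fun z => z * stdNormalCDF (Real.log (z/y)/c + c/2)
        - y * stdNormalCDF (Real.log (z/y)/c - c/2))
      (stdNormalCDF (Real.log (x/y)/c + c/2)) x := by
  have hp := (hasDerivAt_id x).mul (hasDerivAt_Phi_d1 c x y (c/2) hc hx hy)
  have hm := (hasDerivAt_Phi_d1 c x y (-(c/2)) hc hx hy).const_mul y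
  have h := hp.sub hm
  simp only [id_eq] at h
  have hk := key_id c x y hc hx hy
  have hval : 1 * stdNormalCDF (Real.log (x/y)/c + c/2)
      + x * (nPDF (Real.log (x/y)/c + c/2) * (1/(x*c)))
      - y * (nPDF (Real.log (x/y)/c + -(c/2)) * (1/(x*c)))
      = stdNormalCDF (Real.log (x/y)/c + c/2) := by
    have h2 : Real.log (x/y)/c + -(c/2) = Real.log (x/y)/c - c/2 := by ring
    rw [h2]
    linear_combination (1/(x*c)) * hk
  rw [hval] at h
  exact h.congr_of_eventuallyEq (Filter.Eventually.of_forall fun z => by simp [sub_eq_add_neg])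

lemma hasDerivAt_margrabe_S2 (c x y : ℝ) (hc : 0 < c) (hx : 0 < x) (hy : 0 < y) :
    HasDerivAt (fun z => x * stdNormalCDF (Real.log (x/z)/c + c/2)
        - z * stdNormalCDF (Real.log (x/z)/c - c/2))
      (-stdNormalCDF (Real.log (x/y)/c - c/2)) y := by
  have hp := (hasDerivAt_Phi_d2 c x y (c/2) hc hx hy).const_mul x
  have hm := (hasDerivAt_id y).mul (hasDerivAt_Phi_d2 c x y (-(c/2)) hc hx hy)
  have h := hp.sub hm
  simp only [id_eq] at h
  have hk := key_id c x y hc hx hy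
  have hval : x * (nPDF (Real.log (x/y)/c + c/2) * (-(1/(y*c))))
      - (1 * stdNormalCDF (Real.log (x/y)/c + -(c/2))
         + y * (nPDF (Real.log (x/y)/c + -(c/2)) * (-(1/(y*c)))))
      = -stdNormalCDF (Real.log (x/y)/c - c/2) := by
    have h2 : Real.log (x/y)/c + -(c/2) = Real.log (x/y)/c - c/2 := by ring
    rw [h2]
    linear_combination (-(1/(y*c))) * hk
  rw [hval] at h
  exact h.congr_of_eventuallyEq (Filter.Eventually.of_forall fun z => by simp [sub_eq_add_neg])

lemma hasDerivAt_margrabe_t (σ T x y t : ℝ) (hσ0 : 0 < σ) (hx : 0 < x) (hy : 0 < y)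
    (ht : t < T) :
    HasDerivAt (fun τ => x * stdNormalCDF (Real.log (x/y) / (σ * Real.sqrt (T - τ))
          + σ * Real.sqrt (T - τ) / 2)
        - y * stdNormalCDF (Real.log (x/y) / (σ * Real.sqrt (T - τ))
          - σ * Real.sqrt (T - τ) / 2))
      (-(x * nPDF (Real.log (x/y) / (σ * Real.sqrt (T - t)) + σ * Real.sqrt (T - t) / 2)
          * σ / (2 * Real.sqrt (T - t)))) t := by
  have hTt : 0 < T - t := sub_pos.2 ht
  have hu : 0 < Real.sqrt (T - t) := Real.sqrt_pos.2 hTt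
  have hcpos : 0 < σ * Real.sqrt (T - t) := by positivity
  have hsub : HasDerivAt (fun τ : ℝ => T - τ) (-1) t := by
    simpa using (hasDerivAt_id t).const_sub T
  have hsqrt : HasDerivAt (fun τ => Real.sqrt (T - τ)) (-(1/(2 * Real.sqrt (T - t)))) t := by
    have := (Real.hasDerivAt_sqrt hTt.ne').comp t hsub
    exact this.congr_deriv (by ring)
  have hc : HasDerivAt (fun τ => σ * Real.sqrt (T - τ)) (σ * (-(1/(2 * Real.sqrt (T - t))))) t :=
    hsqrt.const_mul σ
  set L := Real.log (x/y) with hL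
  set u := Real.sqrt (T - t) with hudef
  set c' : ℝ := σ * (-(1/(2 * u))) with hc'def
  have hLdiv : HasDerivAt (fun τ => L / (σ * Real.sqrt (T - τ)))
      ((0 * (σ * u) - L * c') / (σ * u)^2) t :=
    (hasDerivAt_const t L).div hc hcpos.ne'
  have hhalf : HasDerivAt (fun τ => σ * Real.sqrt (T - τ) / 2) (c' / 2) t := hc.div_const 2
  have hdp : HasDerivAt (fun τ => L / (σ * Real.sqrt (T - τ)) + σ * Real.sqrt (T - τ) / 2)
      ((0 * (σ * u) - L * c') / (σ * u)^2 + c' / 2) t := hLdiv.add hhalf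
  have hdm : HasDerivAt (fun τ => L / (σ * Real.sqrt (T - τ)) - σ * Real.sqrt (T - τ) / 2)
      ((0 * (σ * u) - L * c') / (σ * u)^2 - c' / 2) t := hLdiv.sub hhalf
  have hPp := ((hasDerivAt_stdNormalCDF (L / (σ * u) + σ * u / 2)).comp t hdp).const_mul x
  have hPm := ((hasDerivAt_stdNormalCDF (L / (σ * u) - σ * u / 2)).comp t hdm).const_mul y
  have h := hPp.sub hPm
  have hk := key_id (σ * u) x y hcpos hx hy
  have hval : x * (nPDF (L / (σ * u) + σ * u / 2) * ((0 * (σ * u) - L * c') / (σ * u)^2 + c' / 2))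
      - y * (nPDF (L / (σ * u) - σ * u / 2) * ((0 * (σ * u) - L * c') / (σ * u)^2 - c' / 2))
      = -(x * nPDF (L / (σ * u) + σ * u / 2) * σ / (2 * u)) := by
    rw [hc'def]
    linear_combination ((0 * (σ * u) - L * (σ * -(1/(2*u)))) / (σ * u)^2 - (σ * -(1/(2*u)))/2) * hk
  rw [hval] at h
  exact h

/-- The Margrabe price V(t,S₁,S₂) = S₁Φ(d₊) − S₂Φ(d₋), with
    d± = ln(S₁/S₂)/(σ√(T−t)) ± σ√(T−t)/2 and σ² = σ₁² + σ₂² − 2ρσ₁σ₂ > 0, solves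
    ∂V/∂t + ½σ₁²S₁² ∂²V/∂S₁² + ½σ₂²S₂² ∂²V/∂S₂² + ρσ₁σ₂S₁S₂ ∂²V/∂S₁∂S₂
      + r(S₁ ∂V/∂S₁ + S₂ ∂V/∂S₂) − rV = 0 for 0 ≤ t < T, S₁, S₂ > 0. -/
theorem stmt12 (σ₁ σ₂ ρ r T : ℝ) (hσ₁ : 0 < σ₁) (hσ₂ : 0 < σ₂)
    (hρ : ρ ∈ Set.Ioo (-1 : ℝ) 1) (hT : 0 < T)
    (σ : ℝ) (hσ : σ = Real.sqrt (σ₁^2 + σ₂^2 - 2 * ρ * σ₁ * σ₂))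
    (hσpos : 0 < σ₁^2 + σ₂^2 - 2 * ρ * σ₁ * σ₂)
    (V : ℝ → ℝ → ℝ → ℝ)
    (hV : ∀ t S₁ S₂, V t S₁ S₂ =
      S₁ * stdNormalCDF (Real.log (S₁ / S₂) / (σ * Real.sqrt (T - t))
            + σ * Real.sqrt (T - t) / 2)
      - S₂ * stdNormalCDF (Real.log (S₁ / S₂) / (σ * Real.sqrt (T - t))
            - σ * Real.sqrt (T - t) / 2)) :
    ∀ t S₁ S₂, 0 ≤ t → t < T → 0 < S₁ → 0 < S₂ →
      deriv (fun τ => V τ S₁ S₂) t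
      + (1/2) * σ₁^2 * S₁^2 * deriv (fun s => deriv (fun s' => V t s' S₂) s) S₁
      + (1/2) * σ₂^2 * S₂^2 * deriv (fun s => deriv (fun s' => V t S₁ s') s) S₂
      + ρ * σ₁ * σ₂ * S₁ * S₂ * deriv (fun s₂ => deriv (fun s₁ => V t s₁ s₂) S₁) S₂
      + r * (S₁ * deriv (fun s => V t s S₂) S₁ + S₂ * deriv (fun s => V t S₁ s) S₂)
      - r * V t S₁ S₂ = 0 := by
  intro t S₁ S₂ ht0 htT hS1 hS2
  have hσ0 : 0 < σ := by rw [hσ]; exact Real.sqrt_pos.2 hσpos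
  have hσ2 : σ^2 = σ₁^2 + σ₂^2 - 2 * ρ * σ₁ * σ₂ := by
    rw [hσ]; exact Real.sq_sqrt hσpos.le
  have hTt : 0 < T - t := sub_pos.2 htT
  have hu : 0 < Real.sqrt (T - t) := Real.sqrt_pos.2 hTt
  have hcpos : 0 < σ * Real.sqrt (T - t) := by positivity
  set c : ℝ := σ * Real.sqrt (T - t) with hcdef
  -- time derivative
  have hDt : deriv (fun τ => V τ S₁ S₂) t
      = -(S₁ * nPDF (Real.log (S₁/S₂) / c + c / 2) * σ / (2 * Real.sqrt (T - t))) := by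
    have heq : (fun τ => V τ S₁ S₂) = fun τ =>
        S₁ * stdNormalCDF (Real.log (S₁/S₂) / (σ * Real.sqrt (T - τ)) + σ * Real.sqrt (T - τ) / 2)
        - S₂ * stdNormalCDF (Real.log (S₁/S₂) / (σ * Real.sqrt (T - τ)) - σ * Real.sqrt (T - τ) / 2) :=
      funext fun τ => hV τ S₁ S₂
    rw [heq]
    exact (hasDerivAt_margrabe_t σ T S₁ S₂ t hσ0 hS1 hS2 htT).deriv
  -- first derivative in S₁
  have hD1 : ∀ z, 0 < z → deriv (fun s => V t s S₂) z
      = stdNormalCDF (Real.log (z/S₂) / c + c / 2) := by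
    intro z hz
    have heq : (fun s => V t s S₂) = fun s =>
        s * stdNormalCDF (Real.log (s/S₂) / c + c / 2)
        - S₂ * stdNormalCDF (Real.log (s/S₂) / c - c / 2) := funext fun s => hV t s S₂
    rw [heq]
    exact (hasDerivAt_margrabe_S1 c z S₂ hcpos hz hS2).deriv
  -- first derivative in S₂
  have hD2 : ∀ z, 0 < z → deriv (fun s => V t S₁ s) z
      = -stdNormalCDF (Real.log (S₁/z) / c - c / 2) := by
    intro z hz
    have heq : (fun s => V t S₁ s) = fun s =>
        S₁ * stdNormalCDF (Real.log (S₁/s) / c + c / 2)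
        - s * stdNormalCDF (Real.log (S₁/s) / c - c / 2) := funext fun s => hV t S₁ s
    rw [heq]
    exact (hasDerivAt_margrabe_S2 c S₁ z hcpos hS1 hz).deriv
  -- second derivative in S₁
  have hD11 : deriv (fun s => deriv (fun s' => V t s' S₂) s) S₁
      = nPDF (Real.log (S₁/S₂) / c + c / 2) * (1/(S₁ * c)) := by
    have hev : (fun s => deriv (fun s' => V t s' S₂) s)
        =ᶠ[nhds S₁] (fun s => stdNormalCDF (Real.log (s/S₂) / c + c / 2)) := by
      filter_upwards [eventually_gt_nhds hS1] with z hz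
      exact hD1 z hz
    rw [hev.deriv_eq]
    exact (hasDerivAt_Phi_d1 c S₁ S₂ (c/2) hcpos hS1 hS2).deriv
  -- second derivative in S₂
  have hD22 : deriv (fun s => deriv (fun s' => V t S₁ s') s) S₂
      = nPDF (Real.log (S₁/S₂) / c - c / 2) * (1/(S₂ * c)) := by
    have hev : (fun s => deriv (fun s' => V t S₁ s') s)
        =ᶠ[nhds S₂] (fun s => -stdNormalCDF (Real.log (S₁/s) / c - c / 2)) := by
      filter_upwards [eventually_gt_nhds hS2] with z hz
      exact hD2 z hz
    rw [hev.deriv_eq]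
    have h := (hasDerivAt_Phi_d2 c S₁ S₂ (-(c/2)) hcpos hS1 hS2).neg
    have heq2 : (fun z => -stdNormalCDF (Real.log (S₁/z) / c - c / 2))
        = fun z => -stdNormalCDF (Real.log (S₁/z) / c + -(c/2)) := by
      funext z; rw [sub_eq_add_neg]
    rw [heq2]
    have := h.deriv
    rw [show (fun z => -stdNormalCDF (Real.log (S₁/z) / c + -(c/2)))
        = -(fun z => stdNormalCDF (Real.log (S₁/z) / c + -(c/2))) from rfl, this]
    rw [show Real.log (S₁/S₂) / c + -(c/2) = Real.log (S₁/S₂) / c - c/2 by ring]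
    ring
  -- mixed second derivative
  have hD12 : deriv (fun s₂ => deriv (fun s₁ => V t s₁ s₂) S₁) S₂
      = nPDF (Real.log (S₁/S₂) / c + c / 2) * (-(1/(S₂ * c))) := by
    have hev : (fun s₂ => deriv (fun s₁ => V t s₁ s₂) S₁)
        =ᶠ[nhds S₂] (fun s₂ => stdNormalCDF (Real.log (S₁/s₂) / c + c / 2)) := by
      filter_upwards [eventually_gt_nhds hS2] with z hz
      have heq : (fun s₁ => V t s₁ z) = fun s =>
          s * stdNormalCDF (Real.log (s/z) / c + c / 2)
          - z * stdNormalCDF (Real.log (s/z) / c - c / 2) := funext fun s => hV t s z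
      rw [heq]
      exact (hasDerivAt_margrabe_S1 c S₁ z hcpos hS1 hz).deriv
    rw [hev.deriv_eq]
    exact (hasDerivAt_Phi_d2 c S₁ S₂ (c/2) hcpos hS1 hS2).deriv
  have hk := key_id c S₁ S₂ hcpos hS1 hS2
  rw [hDt, hD11, hD22, hD12, hD1 S₁ hS1, hD2 S₂ hS2, hV t S₁ S₂]
  set A := nPDF (Real.log (S₁/S₂) / c + c / 2)
  set B := nPDF (Real.log (S₁/S₂) / c - c / 2)
  rw [hcdef]
  field_simp
  linear_combination (-σ₂^2) * hk + (-(S₁*A)) * hσ2
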